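/- arXiv:2301.11149 — 10 statements merged into one kernel-verified Lean document; each statement's English description precedes it below -/
import Mathlib

section
/- The lattice U(3) ⊕ ⟨−2⟩ is isometric to ⟨6⟩ ⊕ A₂(−1). Explicitly, if U(3) = ⟨u₁,u₂⟩ with Gram matrix [[0,3],[3,0]] and ϵ generates ⟨−2⟩, then the elements 2(u₁+u₂)−3ϵ, u₁−ϵ, ϵ−u₂ give such an isometry: 2(u₁+u₂)−3ϵ has square 6 and is orthogonal to u₁−ϵ and ϵ−u₂, which span a copy of A₂(−1). -/
open Matrix

/-- Gram matrix of `U(3) ⊕ ⟨-2⟩` in the basis `u₁, u₂, ϵ`. -/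
def G0 : Matrix (Fin 3) (Fin 3) ℤ := !![0,3,0; 3,0,0; 0,0,-2]

/-- Gram matrix of `⟨6⟩ ⊕ A₂(-1)`. -/
def G0' : Matrix (Fin 3) (Fin 3) ℤ := !![6,0,0; 0,-2,1; 0,1,-2]

/-- The bilinear form of `U(3) ⊕ ⟨-2⟩`. -/
def B0 (v w : Fin 3 → ℤ) : ℤ := v ⬝ᵥ G0.mulVec w

/-- `v₁ = 2(u₁+u₂) - 3ϵ`. -/
def v01 : Fin 3 → ℤ := ![2, 2, -3]
/-- `v₂ = u₁ - ϵ`. -/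
def v02 : Fin 3 → ℤ := ![1, 0, -1]
/-- `v₃ = ϵ - u₂`. -/
def v03 : Fin 3 → ℤ := ![0, -1, 1]

/-- The matrix whose columns are `v₁, v₂, v₃`. -/
def P0 : Matrix (Fin 3) (Fin 3) ℤ := !![2,1,0; 2,0,-1; -3,-1,1]

/-- Two integral lattices given by Gram matrices are isometric. -/
def LatIsom {n : ℕ} (G G' : Matrix (Fin n) (Fin n) ℤ) : Prop :=
  ∃ P : Matrix (Fin n) (Fin n) ℤ, IsUnit P.det ∧ Pᵀ * G * P = G'

/-- `U(3) ⊕ ⟨-2⟩ ≅ ⟨6⟩ ⊕ A₂(-1)`, explicitly: `2(u₁+u₂)-3ϵ` has square 6 and is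
orthogonal to `u₁-ϵ` and `ϵ-u₂`, which span a copy of `A₂(-1)`; the three vectors form a
ℤ-basis giving such an isometry. -/
theorem stmt_0 :
    B0 v01 v01 = 6 ∧ B0 v01 v02 = 0 ∧ B0 v01 v03 = 0 ∧
    IsUnit P0.det ∧
    LatIsom !![B0 v02 v02, B0 v02 v03; B0 v03 v02, B0 v03 v03] !![-2,1; 1,-2] ∧
    LatIsom G0 G0' := by

  refine ⟨by decide, by decide, by decide, ?_, ⟨!![1,0;0,-1], ?_, by decide⟩,
    ⟨P0 * !![1,0,0;0,1,0;0,0,-1], ?_, by decide⟩⟩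
  · rw [show P0.det = -1 by decide]; exact isUnit_one.neg
  · rw [show (!![1,0;0,-1] : Matrix (Fin 2) (Fin 2) ℤ).det = -1 by decide]; exact isUnit_one.neg
  · have h : (P0 * !![1,0,0;0,1,0;0,0,-1]).det = (1 : ℤ) := by decide
    rw [h]; exact isUnit_one
end

section
/- The rank 5 lattice U ⊕ A₂(−2) ⊕ ⟨−2⟩, presented in basis C₁,E₁,E₂,E₃,ϵ with Gram matrix given by [[0,1,1,1,0],[1,−2,0,0,0],[1,0,−2,0,0],[1,0,0,−2,0],[0,0,0,0,−2]], is isometric to ⟨6⟩ ⊕ D₄(−1); an isometry is given by the basis −E₁, E₂, C₁−ϵ, E₃, 2(2C₁+E₁+E₂+E₃)−3ϵ, where the last vector has square 6 and is orthogonal to the first four, which span a copy of D₄(−1). -/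
open Matrix

/-- Gram matrix of `U ⊕ A₂(-2) ⊕ ⟨-2⟩` in the basis `C₁, E₁, E₂, E₃, ϵ`. -/
def G2 : Matrix (Fin 5) (Fin 5) ℤ :=
  !![0,1,1,1,0; 1,-2,0,0,0; 1,0,-2,0,0; 1,0,0,-2,0; 0,0,0,0,-2]

/-- The matrix whose columns are `-E₁, E₂, C₁-ϵ, E₃, 2(2C₁+E₁+E₂+E₃)-3ϵ`. -/
def P2 : Matrix (Fin 5) (Fin 5) ℤ :=
  !![0,0,1,0,4; -1,0,0,0,2; 0,1,0,0,2; 0,0,0,1,2; 0,0,-1,0,-3]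

/-- Gram matrix of `D₄(-1) ⊕ ⟨6⟩` (D₄(-1) in the first four coordinates, the square 6
vector last). -/
def G2' : Matrix (Fin 5) (Fin 5) ℤ :=
  !![-2,0,-1,0,0; 0,-2,1,0,0; -1,1,-2,1,0; 0,0,1,-2,0; 0,0,0,0,6]

set_option maxRecDepth 10000 in
/-- `U ⊕ A₂(-2) ⊕ ⟨-2⟩ ≅ ⟨6⟩ ⊕ D₄(-1)` via the ℤ-basis
`-E₁, E₂, C₁-ϵ, E₃, 2(2C₁+E₁+E₂+E₃)-3ϵ`: the last vector has square 6 and is orthogonal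
to the first four, which span a copy of `D₄(-1)`. -/
theorem stmt_2 : IsUnit P2.det ∧ P2ᵀ * G2 * P2 = G2' := by
  constructor
  · rw [show P2.det = -1 by decide]; exact isUnit_one.neg
  · decide
end

section
/- Let ρ be the order-three fixed-point-free isometry of D₄(−1) defined by d₁ ↦ −d₁+d₃−d₄, d₂ ↦ −d₁+d₂−d₃, d₃ ↦ −d₁−d₂+d₃+d₄, d₄ ↦ −d₂+d₃−d₄ on the basis with Gram matrix [[−2,0,−1,0],[0,−2,1,0],[−1,1,−2,1],[0,0,1,−2]]. The induced action of ρ on the discriminant group D₄(−1)*/D₄(−1) ≅ (ℤ/2ℤ)² is nontrivial: for the classes a = −d₁+½d₂+d₃+½d₄ and b = ½d₁−d₂−d₃−½d₄ generating the discriminant group, one has ρ*(a)=b and ρ*(b)=a+b. -/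
/-!
The Gram matrix `G` of `D₄(-1)` has an explicit rational inverse whose columns `G⁻¹dᵢ` form the
basis of `D₄(-1)*` dual to `d₁, …, d₄`. The first two columns are `a` and `b`, the third is
integral and the fourth is `a + b` modulo `D₄(-1)`; writing a dual vector as `x = G⁻¹(Gx)` with
`Gx` integral shows that `a` and `b` generate the discriminant group. The action of `ρ` is read
off from `ρa = b + (integral)` and `ρb = a + b + (integral)`, and `a`, `b`, `ρa - a` are not
integral because each has a coordinate `½`.
-/

open Matrix

/-- Gram matrix of `D₄(-1)` in the basis `d₁, d₂, d₃, d₄`. -/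
def G4 : Matrix (Fin 4) (Fin 4) ℤ := !![-2,0,-1,0; 0,-2,1,0; -1,1,-2,1; 0,0,1,-2]

/-- The matrix of `ρ` (columns are the images of the basis vectors). -/
def R4 : Matrix (Fin 4) (Fin 4) ℤ := !![-1,-1,-1,0; 0,1,-1,-1; 1,-1,1,1; -1,0,1,-1]

/-- A rational vector (in `d`-coordinates) lies in the lattice `D₄(-1) = ℤ⁴`. -/
def Integral4 (x : Fin 4 → ℚ) : Prop := ∀ i, ∃ m : ℤ, x i = m

/-- A rational vector lies in the dual lattice `D₄(-1)*`. -/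
def InDual4 (x : Fin 4 → ℚ) : Prop := Integral4 ((G4.map (Int.cast : ℤ → ℚ)).mulVec x)

/-- `a = -d₁ + ½d₂ + d₃ + ½d₄`. -/
def a4 : Fin 4 → ℚ := ![-1, 1/2, 1, 1/2]
/-- `b = ½d₁ - d₂ - d₃ - ½d₄`. -/
def b4 : Fin 4 → ℚ := ![1/2, -1, -1, -1/2]

def intLattice (n : ℕ) : AddSubgroup (Fin n → ℚ) :=
  (AddMonoidHom.compLeft (Int.castAddHom ℚ) (Fin n)).range

lemma intCast_comp_mem_intLattice {n : ℕ} (v : Fin n → ℤ) : Int.cast ∘ v ∈ intLattice n :=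
  ⟨v, rfl⟩

lemma single_one_mem_intLattice {n : ℕ} (j : Fin n) : Pi.single j 1 ∈ intLattice n := by
  convert intCast_comp_mem_intLattice (Pi.single j 1)
  ext i
  simp [Pi.single_apply, apply_ite]

lemma integral4_iff_mem_intLattice {x : Fin 4 → ℚ} : Integral4 x ↔ x ∈ intLattice 4 := by
  simp only [Integral4, intLattice, AddMonoidHom.mem_range, funext_iff, eq_comm (b := x _)]
  exact Classical.skolem

lemma notMem_intLattice_of_apply_eq_half {n : ℕ} {x : Fin n → ℚ} {i : Fin n} (hi : x i = 1 / 2) :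
    x ∉ intLattice n := by
  rintro ⟨v, rfl⟩
  have : (2 * v i : ℚ) = 1 := by simp_all
  norm_cast at this
  omega

def G4inv : Matrix (Fin 4) (Fin 4) ℚ :=
  (of ![a4, b4, ![1, -1, -2, -1], ![1/2, -1/2, -1, -1]])ᵀ

lemma G4_mul_G4inv : G4.map Int.cast * G4inv = 1 := by
  ext i j
  fin_cases i <;> fin_cases j <;>
    simp [G4, G4inv, a4, b4, mul_apply, Fin.sum_univ_four] <;> norm_num

lemma G4inv_mul_G4 : G4inv * G4.map Int.cast = 1 := mul_eq_one_comm.mp G4_mul_G4inv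

lemma G4_mulVec_G4inv_col (j : Fin 4) : G4.map Int.cast *ᵥ G4inv.col j = Pi.single j 1 := by
  rw [← mulVec_single_one, mulVec_mulVec, G4_mul_G4inv, one_mulVec]

lemma G4inv_col_zero : G4inv.col 0 = a4 := rfl

lemma G4inv_col_one : G4inv.col 1 = b4 := rfl

lemma G4inv_col_two : G4inv.col 2 = Int.cast ∘ ![1, -1, -2, -1] := by
  ext i; fin_cases i <;> simp [G4inv]

lemma G4inv_col_three : G4inv.col 3 = a4 + b4 + Int.cast ∘ ![1, 0, -1, -1] := by
  ext i; fin_cases i <;> simp [G4inv, a4, b4] <;> norm_num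

lemma R4_mulVec_a4 : R4.map Int.cast *ᵥ a4 = b4 + Int.cast ∘ ![-1, 0, 1, 2] := by
  ext i
  fin_cases i <;> simp [R4, a4, b4, mulVec, dotProduct, Fin.sum_univ_four] <;> norm_num

lemma R4_mulVec_b4 : R4.map Int.cast *ᵥ b4 = a4 + b4 + Int.cast ∘ ![2, 1, 0, -1] := by
  ext i
  fin_cases i <;> simp [R4, a4, b4, mulVec, dotProduct, Fin.sum_univ_four] <;> norm_num

lemma eq_sum_smul_G4inv_col (x : Fin 4 → ℚ) :
    x = ∑ j, (G4.map Int.cast *ᵥ x) j • G4inv.col j := by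
  conv_lhs => rw [← one_mulVec x, ← G4inv_mul_G4, ← mulVec_mulVec, mulVec_eq_sum]
  simp only [op_smul_eq_smul]
  rfl

lemma exists_sub_smul_a4_sub_smul_b4_mem_intLattice {x : Fin 4 → ℚ}
    (hx : G4.map Int.cast *ᵥ x ∈ intLattice 4) :
    ∃ k l : ℤ, x - (k : ℚ) • a4 - (l : ℚ) • b4 ∈ intLattice 4 := by
  obtain ⟨m, hm⟩ := hx
  have hGx (j : Fin 4) : (G4.map Int.cast *ᵥ x) j = m j := (congrFun hm j).symm
  refine ⟨m 0 + m 3, m 1 + m 3, ?_⟩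
  have hrest : x - ((m 0 + m 3 : ℤ) : ℚ) • a4 - ((m 1 + m 3 : ℤ) : ℚ) • b4 =
      m 2 • (Int.cast ∘ ![1, -1, -2, -1] : Fin 4 → ℚ) + m 3 • (Int.cast ∘ ![1, 0, -1, -1]) := by
    conv_lhs => rw [eq_sum_smul_G4inv_col x]
    simp only [Fin.sum_univ_four, hGx, G4inv_col_zero, G4inv_col_one, G4inv_col_two,
      G4inv_col_three, ← Int.cast_smul_eq_zsmul ℚ]
    push_cast
    module
  rw [hrest]
  exact add_mem (zsmul_mem (intCast_comp_mem_intLattice _) _)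
    (zsmul_mem (intCast_comp_mem_intLattice _) _)

/-- the classes of `a` and `b` lie in the dual lattice, are nontrivial in the
discriminant group `D₄(-1)*/D₄(-1) ≅ (ℤ/2ℤ)²`, generate it, and the induced action of `ρ`
is nontrivial: `ρ*(a) = b` and `ρ*(b) = a + b` in the discriminant group, while
`ρ*(a) ≠ a` there. -/
theorem stmt_4 :
    InDual4 a4 ∧ InDual4 b4 ∧ ¬ Integral4 a4 ∧ ¬ Integral4 b4 ∧
    Integral4 ((2 : ℚ) • a4) ∧ Integral4 ((2 : ℚ) • b4) ∧
    (∀ x : Fin 4 → ℚ, InDual4 x → ∃ k l : ℤ,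
      Integral4 (x - (k : ℚ) • a4 - (l : ℚ) • b4)) ∧
    Integral4 ((R4.map (Int.cast : ℤ → ℚ)).mulVec a4 - b4) ∧
    Integral4 ((R4.map (Int.cast : ℤ → ℚ)).mulVec b4 - (a4 + b4)) ∧
    ¬ Integral4 ((R4.map (Int.cast : ℤ → ℚ)).mulVec a4 - a4) := by
  simp only [InDual4, integral4_iff_mem_intLattice]
  refine ⟨?_, ?_, notMem_intLattice_of_apply_eq_half (i := 1) (by norm_num [a4]),
    notMem_intLattice_of_apply_eq_half (i := 0) (by norm_num [b4]), ?_, ?_,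
    fun x hx => exists_sub_smul_a4_sub_smul_b4_mem_intLattice hx, ?_, ?_,
    notMem_intLattice_of_apply_eq_half (i := 0) ?_⟩
  · rw [← G4inv_col_zero, G4_mulVec_G4inv_col]
    exact single_one_mem_intLattice 0
  · rw [← G4inv_col_one, G4_mulVec_G4inv_col]
    exact single_one_mem_intLattice 1
  · rw [show (2 : ℚ) • a4 = Int.cast ∘ ![-2, 1, 2, 1] by ext i; fin_cases i <;> norm_num [a4]]
    exact intCast_comp_mem_intLattice _
  · rw [show (2 : ℚ) • b4 = Int.cast ∘ ![1, -2, -2, -1] by ext i; fin_cases i <;> norm_num [b4]]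
    exact intCast_comp_mem_intLattice _
  · rw [R4_mulVec_a4, add_sub_cancel_left]
    exact intCast_comp_mem_intLattice _
  · rw [R4_mulVec_b4, add_sub_cancel_left]
    exact intCast_comp_mem_intLattice _
  · rw [R4_mulVec_a4]
    norm_num [a4, b4, vecHead]
end

section
/- Let E₆ = ⟨e₁,…,e₆⟩ with the standard Bourbaki Dynkin diagram (e₁–e₃–e₄–e₅–e₆ a chain and e₂ attached to e₄). The map ρ given by e₁ ↦ −e₁−e₃−e₄−e₅−e₆, e₂ ↦ e₃+e₄+e₅, e₃ ↦ −e₂−e₃−e₄, e₄ ↦ −e₄−e₅, e₅ ↦ e₄, e₆ ↦ e₁+e₂+e₃+e₄+e₅ is an isometry of E₆ of order three with no nonzero fixed vectors. -/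
open Matrix

def G6 : Matrix (Fin 6) (Fin 6) ℤ :=
  !![2,0,-1,0,0,0; 0,2,0,-1,0,0; -1,0,2,-1,0,0; 0,-1,-1,2,-1,0; 0,0,0,-1,2,-1; 0,0,0,0,-1,2]

def R6 : Matrix (Fin 6) (Fin 6) ℤ :=
  !![-1,0,0,0,0,1; 0,0,-1,0,0,1; -1,1,-1,0,0,1; -1,1,-1,-1,1,1; -1,1,0,-1,0,1; -1,0,0,0,0,0]

/-- `ρ` is an isometry of `E₆` of order three with no nonzero fixed vectors. -/
theorem stmt_6 :
    R6ᵀ * G6 * R6 = G6 ∧ R6 ^ 3 = 1 ∧ R6 ≠ 1 ∧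
    ∀ v : Fin 6 → ℤ, R6.mulVec v = v → v = 0 := by
  refine ⟨by decide, by decide, by decide, ?_⟩
  have hM : (1 : Matrix (Fin 6) (Fin 6) ℤ) + R6 + R6 ^ 2 = 0 := by decide
  intro v hv
  have h2 : (R6 ^ 2).mulVec v = v := by
    rw [pow_two, ← mulVec_mulVec, hv, hv]
  have h3 : ((1 : Matrix (Fin 6) (Fin 6) ℤ) + R6 + R6 ^ 2).mulVec v = 3 • v := by
    rw [add_mulVec, add_mulVec, one_mulVec, hv, h2]
    funext i; simp [Pi.smul_apply]; ring
  rw [hM, zero_mulVec] at h3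
  funext i
  have h := congrFun h3 i
  simp only [Pi.zero_apply, Pi.smul_apply, smul_eq_mul] at h
  show v i = 0
  simp at h ⊢
  omega
end

section
/- The order-three isometry ρ of E₆ defined by e₁ ↦ −e₁−e₃−e₄−e₅−e₆, e₂ ↦ e₃+e₄+e₅, e₃ ↦ −e₂−e₃−e₄, e₄ ↦ −e₄−e₅, e₅ ↦ e₄, e₆ ↦ e₁+e₂+e₃+e₄+e₅ acts trivially on the discriminant group E₆*/E₆ ≅ ℤ/3ℤ, which is generated by the class of −(4/3)e₁−e₂−(5/3)e₃−2e₄−(4/3)e₅−(2/3)e₆. -/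
open Matrix

/-- Gram matrix of `E₆` in the Bourbaki basis. -/
def G7 : Matrix (Fin 6) (Fin 6) ℤ :=
  !![2,0,-1,0,0,0; 0,2,0,-1,0,0; -1,0,2,-1,0,0; 0,-1,-1,2,-1,0; 0,0,0,-1,2,-1; 0,0,0,0,-1,2]

/-- The matrix of the order-three isometry `ρ` (columns are images of `e₁,…,e₆`). -/
def R7 : Matrix (Fin 6) (Fin 6) ℤ :=
  !![-1,0,0,0,0,1; 0,0,-1,0,0,1; -1,1,-1,0,0,1; -1,1,-1,-1,1,1; -1,1,0,-1,0,1; -1,0,0,0,0,0]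

/-- A rational vector (in `e`-coordinates) lies in `E₆ = ℤ⁶`. -/
def Integral6 (x : Fin 6 → ℚ) : Prop := ∀ i, ∃ m : ℤ, x i = m

/-- A rational vector lies in the dual lattice `E₆*`. -/
def InDual6 (x : Fin 6 → ℚ) : Prop := Integral6 ((G7.map (Int.cast : ℤ → ℚ)).mulVec x)

/-- The generator `g = -(4/3)e₁ - e₂ - (5/3)e₃ - 2e₄ - (4/3)e₅ - (2/3)e₆` of `E₆*/E₆`. -/
def g7 : Fin 6 → ℚ := ![-4/3, -1, -5/3, -2, -4/3, -2/3]

private lemma cv0 {α : Type*} (a0 a1 a2 a3 a4 a5 : α) :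
    ![a0,a1,a2,a3,a4,a5] (0 : Fin 6) = a0 := rfl
private lemma cv1 {α : Type*} (a0 a1 a2 a3 a4 a5 : α) :
    ![a0,a1,a2,a3,a4,a5] (1 : Fin 6) = a1 := rfl
private lemma cv2 {α : Type*} (a0 a1 a2 a3 a4 a5 : α) :
    ![a0,a1,a2,a3,a4,a5] (2 : Fin 6) = a2 := rfl
private lemma cv3 {α : Type*} (a0 a1 a2 a3 a4 a5 : α) :
    ![a0,a1,a2,a3,a4,a5] (3 : Fin 6) = a3 := rfl
private lemma cv4 {α : Type*} (a0 a1 a2 a3 a4 a5 : α) :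
    ![a0,a1,a2,a3,a4,a5] (4 : Fin 6) = a4 := rfl
private lemma cv5 {α : Type*} (a0 a1 a2 a3 a4 a5 : α) :
    ![a0,a1,a2,a3,a4,a5] (5 : Fin 6) = a5 := rfl

private lemma cvm0 {α : Type*} (a0 a1 a2 a3 a4 a5 : α) (h : 0 < 6) :
    ![a0,a1,a2,a3,a4,a5] (⟨0, h⟩ : Fin 6) = a0 := rfl
private lemma cvm1 {α : Type*} (a0 a1 a2 a3 a4 a5 : α) (h : 1 < 6) :
    ![a0,a1,a2,a3,a4,a5] (⟨1, h⟩ : Fin 6) = a1 := rfl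
private lemma cvm2 {α : Type*} (a0 a1 a2 a3 a4 a5 : α) (h : 2 < 6) :
    ![a0,a1,a2,a3,a4,a5] (⟨2, h⟩ : Fin 6) = a2 := rfl
private lemma cvm3 {α : Type*} (a0 a1 a2 a3 a4 a5 : α) (h : 3 < 6) :
    ![a0,a1,a2,a3,a4,a5] (⟨3, h⟩ : Fin 6) = a3 := rfl
private lemma cvm4 {α : Type*} (a0 a1 a2 a3 a4 a5 : α) (h : 4 < 6) :
    ![a0,a1,a2,a3,a4,a5] (⟨4, h⟩ : Fin 6) = a4 := rfl
private lemma cvm5 {α : Type*} (a0 a1 a2 a3 a4 a5 : α) (h : 5 < 6) :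
    ![a0,a1,a2,a3,a4,a5] (⟨5, h⟩ : Fin 6) = a5 := rfl

private lemma key6 : ∀ x : Fin 6 → ℚ, InDual6 x →
    Integral6 ((R7.map (Int.cast : ℤ → ℚ)).mulVec x - x) := by
  intro x hx
  choose y hy using hx
  have E0 := hy 0; have E1 := hy 1; have E2 := hy 2
  have E3 := hy 3; have E4 := hy 4; have E5 := hy 5
  simp only [G7, Matrix.mulVec, dotProduct, Fin.sum_univ_six, Matrix.map_apply, Matrix.of_apply, cv0, cv1, cv2, cv3, cv4, cv5, cvm0, cvm1, cvm2, cvm3, cvm4, cvm5] at E0 E1 E2 E3 E4 E5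
  intro i
  fin_cases i <;>
    simp only [Pi.sub_apply, R7, Matrix.mulVec, dotProduct, Fin.sum_univ_six, Matrix.map_apply, Matrix.of_apply, cv0, cv1, cv2, cv3, cv4, cv5, cvm0, cvm1, cvm2, cvm3, cvm4, cvm5]
  · refine ⟨(-2) * y 0 + (-1) * y 1 + (-2) * y 2 + (-2) * y 3 + (-1) * y 4 + (0) * y 5, ?_⟩
    push_cast
    linear_combination ((-2:ℚ)) * E0 + ((-1:ℚ)) * E1 + ((-2:ℚ)) * E2 + ((-2:ℚ)) * E3 + ((-1:ℚ)) * E4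
  · refine ⟨(-2) * y 0 + (-3) * y 1 + (-4) * y 2 + (-5) * y 3 + (-3) * y 4 + (-1) * y 5, ?_⟩
    push_cast
    linear_combination ((-2:ℚ)) * E0 + ((-3:ℚ)) * E1 + ((-4:ℚ)) * E2 + ((-5:ℚ)) * E3 + ((-3:ℚ)) * E4 + ((-1:ℚ)) * E5
  · refine ⟨(-3) * y 0 + (-2) * y 1 + (-5) * y 2 + (-5) * y 3 + (-3) * y 4 + (-1) * y 5, ?_⟩
    push_cast
    linear_combination ((-3:ℚ)) * E0 + ((-2:ℚ)) * E1 + ((-5:ℚ)) * E2 + ((-5:ℚ)) * E3 + ((-3:ℚ)) * E4 + ((-1:ℚ)) * E5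
  · refine ⟨(-4) * y 0 + (-4) * y 1 + (-7) * y 2 + (-9) * y 3 + (-5) * y 4 + (-2) * y 5, ?_⟩
    push_cast
    linear_combination ((-4:ℚ)) * E0 + ((-4:ℚ)) * E1 + ((-7:ℚ)) * E2 + ((-9:ℚ)) * E3 + ((-5:ℚ)) * E4 + ((-2:ℚ)) * E5
  · refine ⟨(-3) * y 0 + (-3) * y 1 + (-5) * y 2 + (-7) * y 3 + (-5) * y 4 + (-2) * y 5, ?_⟩
    push_cast
    linear_combination ((-3:ℚ)) * E0 + ((-3:ℚ)) * E1 + ((-5:ℚ)) * E2 + ((-7:ℚ)) * E3 + ((-5:ℚ)) * E4 + ((-2:ℚ)) * E5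
  · refine ⟨(-2) * y 0 + (-2) * y 1 + (-3) * y 2 + (-4) * y 3 + (-3) * y 4 + (-2) * y 5, ?_⟩
    push_cast
    linear_combination ((-2:ℚ)) * E0 + ((-2:ℚ)) * E1 + ((-3:ℚ)) * E2 + ((-4:ℚ)) * E3 + ((-3:ℚ)) * E4 + ((-2:ℚ)) * E5

private lemma key4 : ∀ x : Fin 6 → ℚ, InDual6 x →
    ∃ k : ℤ, Integral6 (x - (k : ℚ) • g7) := by
  intro x hx
  choose y hy using hx
  have E0 := hy 0; have E1 := hy 1; have E2 := hy 2
  have E3 := hy 3; have E4 := hy 4; have E5 := hy 5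
  simp only [G7, Matrix.mulVec, dotProduct, Fin.sum_univ_six, Matrix.map_apply, Matrix.of_apply, cv0, cv1, cv2, cv3, cv4, cv5, cvm0, cvm1, cvm2, cvm3, cvm4, cvm5] at E0 E1 E2 E3 E4 E5
  refine ⟨2 * y 0 + y 2 + 2 * y 4 + y 5, ?_⟩
  intro i
  fin_cases i <;>
    simp only [Pi.sub_apply, Pi.smul_apply, smul_eq_mul, g7, cv0, cv1, cv2, cv3, cv4, cv5, cvm0, cvm1, cvm2, cvm3, cvm4, cvm5]
  · refine ⟨(4) * y 0 + (1) * y 1 + (3) * y 2 + (2) * y 3 + (4) * y 4 + (2) * y 5, ?_⟩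
    push_cast
    linear_combination ((4:ℚ)/3) * E0 + ((3:ℚ)/3) * E1 + ((5:ℚ)/3) * E2 + ((6:ℚ)/3) * E3 + ((4:ℚ)/3) * E4 + ((2:ℚ)/3) * E5
  · refine ⟨(3) * y 0 + (2) * y 1 + (3) * y 2 + (3) * y 3 + (4) * y 4 + (2) * y 5, ?_⟩
    push_cast
    linear_combination ((3:ℚ)/3) * E0 + ((6:ℚ)/3) * E1 + ((6:ℚ)/3) * E2 + ((9:ℚ)/3) * E3 + ((6:ℚ)/3) * E4 + ((3:ℚ)/3) * E5
  · refine ⟨(5) * y 0 + (2) * y 1 + (5) * y 2 + (4) * y 3 + (6) * y 4 + (3) * y 5, ?_⟩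
    push_cast
    linear_combination ((5:ℚ)/3) * E0 + ((6:ℚ)/3) * E1 + ((10:ℚ)/3) * E2 + ((12:ℚ)/3) * E3 + ((8:ℚ)/3) * E4 + ((4:ℚ)/3) * E5
  · refine ⟨(6) * y 0 + (3) * y 1 + (6) * y 2 + (6) * y 3 + (8) * y 4 + (4) * y 5, ?_⟩
    push_cast
    linear_combination ((6:ℚ)/3) * E0 + ((9:ℚ)/3) * E1 + ((12:ℚ)/3) * E2 + ((18:ℚ)/3) * E3 + ((12:ℚ)/3) * E4 + ((6:ℚ)/3) * E5
  · refine ⟨(4) * y 0 + (2) * y 1 + (4) * y 2 + (4) * y 3 + (6) * y 4 + (3) * y 5, ?_⟩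
    push_cast
    linear_combination ((4:ℚ)/3) * E0 + ((6:ℚ)/3) * E1 + ((8:ℚ)/3) * E2 + ((12:ℚ)/3) * E3 + ((10:ℚ)/3) * E4 + ((5:ℚ)/3) * E5
  · refine ⟨(2) * y 0 + (1) * y 1 + (2) * y 2 + (2) * y 3 + (3) * y 4 + (2) * y 5, ?_⟩
    push_cast
    linear_combination ((2:ℚ)/3) * E0 + ((3:ℚ)/3) * E1 + ((4:ℚ)/3) * E2 + ((6:ℚ)/3) * E3 + ((5:ℚ)/3) * E4 + ((4:ℚ)/3) * E5

private lemma key1 : InDual6 g7 := by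
  intro i
  fin_cases i
  · exact ⟨-1, by simp only [G7, g7, Matrix.mulVec, dotProduct, Fin.sum_univ_six, Matrix.map_apply, Matrix.of_apply, cv0, cv1, cv2, cv3, cv4, cv5, cvm0, cvm1, cvm2, cvm3, cvm4, cvm5]; norm_num⟩
  · exact ⟨0, by simp only [G7, g7, Matrix.mulVec, dotProduct, Fin.sum_univ_six, Matrix.map_apply, Matrix.of_apply, cv0, cv1, cv2, cv3, cv4, cv5, cvm0, cvm1, cvm2, cvm3, cvm4, cvm5]; norm_num⟩
  · exact ⟨0, by simp only [G7, g7, Matrix.mulVec, dotProduct, Fin.sum_univ_six, Matrix.map_apply, Matrix.of_apply, cv0, cv1, cv2, cv3, cv4, cv5, cvm0, cvm1, cvm2, cvm3, cvm4, cvm5]; norm_num⟩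
  · exact ⟨0, by simp only [G7, g7, Matrix.mulVec, dotProduct, Fin.sum_univ_six, Matrix.map_apply, Matrix.of_apply, cv0, cv1, cv2, cv3, cv4, cv5, cvm0, cvm1, cvm2, cvm3, cvm4, cvm5]; norm_num⟩
  · exact ⟨0, by simp only [G7, g7, Matrix.mulVec, dotProduct, Fin.sum_univ_six, Matrix.map_apply, Matrix.of_apply, cv0, cv1, cv2, cv3, cv4, cv5, cvm0, cvm1, cvm2, cvm3, cvm4, cvm5]; norm_num⟩
  · exact ⟨0, by simp only [G7, g7, Matrix.mulVec, dotProduct, Fin.sum_univ_six, Matrix.map_apply, Matrix.of_apply, cv0, cv1, cv2, cv3, cv4, cv5, cvm0, cvm1, cvm2, cvm3, cvm4, cvm5]; norm_num⟩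

/-- the discriminant group `E₆*/E₆ ≅ ℤ/3ℤ` is generated by the class of `g`,
which is a nontrivial 3-torsion class, and `ρ` acts trivially on it: `ρ*(g) ≡ g` and,
more generally, `ρ*(x) ≡ x` for every `x` in the dual lattice. -/
theorem stmt_7 :
    InDual6 g7 ∧ ¬ Integral6 g7 ∧ Integral6 ((3 : ℚ) • g7) ∧
    (∀ x : Fin 6 → ℚ, InDual6 x → ∃ k : ℤ, Integral6 (x - (k : ℚ) • g7)) ∧
    Integral6 ((R7.map (Int.cast : ℤ → ℚ)).mulVec g7 - g7) ∧
    (∀ x : Fin 6 → ℚ, InDual6 x →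
      Integral6 ((R7.map (Int.cast : ℤ → ℚ)).mulVec x - x)) := by
  refine ⟨key1, ?_, ?_, key4, key6 g7 key1, key6⟩
  · intro h
    obtain ⟨m, hm⟩ := h 0
    simp only [g7, cv0] at hm
    have h3 : (3 * m : ℚ) = -4 := by rw [← hm]; ring
    have h4 : (3 * m : ℤ) = -4 := by exact_mod_cast h3
    omega
  · intro i
    fin_cases i
    · exact ⟨-4, by simp only [Pi.smul_apply, smul_eq_mul, g7, cv0, cv1, cv2, cv3, cv4, cv5, cvm0, cvm1, cvm2, cvm3, cvm4, cvm5]; norm_num⟩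
    · exact ⟨-3, by simp only [Pi.smul_apply, smul_eq_mul, g7, cv0, cv1, cv2, cv3, cv4, cv5, cvm0, cvm1, cvm2, cvm3, cvm4, cvm5]; norm_num⟩
    · exact ⟨-5, by simp only [Pi.smul_apply, smul_eq_mul, g7, cv0, cv1, cv2, cv3, cv4, cv5, cvm0, cvm1, cvm2, cvm3, cvm4, cvm5]; norm_num⟩
    · exact ⟨-6, by simp only [Pi.smul_apply, smul_eq_mul, g7, cv0, cv1, cv2, cv3, cv4, cv5, cvm0, cvm1, cvm2, cvm3, cvm4, cvm5]; norm_num⟩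
    · exact ⟨-4, by simp only [Pi.smul_apply, smul_eq_mul, g7, cv0, cv1, cv2, cv3, cv4, cv5, cvm0, cvm1, cvm2, cvm3, cvm4, cvm5]; norm_num⟩
    · exact ⟨-2, by simp only [Pi.smul_apply, smul_eq_mul, g7, cv0, cv1, cv2, cv3, cv4, cv5, cvm0, cvm1, cvm2, cvm3, cvm4, cvm5]; norm_num⟩
end

section
/- The rank 6 lattice with Gram matrix [[0,0,0,1,0,0],[0,−2,1,0,0,0],[0,1,−2,1,0,0],[1,0,1,−2,1,0],[0,0,0,1,−2,1],[0,0,0,0,1,−2]] in basis C₁,E₁,…,E₅ contains the sublattice spanned by C₁+E₃, C₁, E₁, E₂−C₁, E₄−C₁, E₅, which is isometric to U ⊕ A₂(−1) ⊕ A₂(−1); moreover this sublattice is all of the lattice, i.e. the two lattices are isometric (equality of determinants shows the inclusion has index one). -/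
open Matrix

/-- Gram matrix of the rank 6 lattice in the basis `C₁, E₁, E₂, E₃, E₄, E₅`. -/
def G8 : Matrix (Fin 6) (Fin 6) ℤ :=
  !![0,0,0,1,0,0; 0,-2,1,0,0,0; 0,1,-2,1,0,0; 1,0,1,-2,1,0; 0,0,0,1,-2,1; 0,0,0,0,1,-2]

/-- The matrix whose columns are `C₁+E₃, C₁, E₁, E₂-C₁, E₄-C₁, E₅`. -/
def P8 : Matrix (Fin 6) (Fin 6) ℤ :=
  !![1,1,0,-1,-1,0; 0,0,1,0,0,0; 0,0,0,1,0,0; 1,0,0,0,0,0; 0,0,0,0,1,0; 0,0,0,0,0,1]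

/-- Gram matrix of `U ⊕ A₂(-1) ⊕ A₂(-1)`. -/
def G8' : Matrix (Fin 6) (Fin 6) ℤ :=
  !![0,1,0,0,0,0; 1,0,0,0,0,0; 0,0,-2,1,0,0; 0,0,1,-2,0,0; 0,0,0,0,-2,1; 0,0,0,0,1,-2]

/-- the vectors `C₁+E₃, C₁, E₁, E₂-C₁, E₄-C₁, E₅` have Gram matrix
`U ⊕ A₂(-1) ⊕ A₂(-1)` and form a ℤ-basis of the whole lattice (the change-of-basis matrix
is unimodular), so the two lattices are isometric. -/
theorem stmt_8 : IsUnit P8.det ∧ P8ᵀ * G8 * P8 = G8' := by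
  constructor
  · have h : P8 * !![0,0,0,1,0,0; 1,0,1,-1,1,0; 0,1,0,0,0,0;
        0,0,1,0,0,0; 0,0,0,0,1,0; 0,0,0,0,0,1] = 1 := by
      ext i j
      fin_cases i <;> fin_cases j <;> rfl
    exact Matrix.isUnit_det_of_right_inverse h
  · ext i j
    fin_cases i <;> fin_cases j <;> rfl
end

section
/- The rank 7 lattice U ⊕ A₂(−1)^⊕2 ⊕ ⟨−2⟩ is isometric to E₆(−1) ⊕ ⟨6⟩. Concretely, in the presentation with basis C₁,E₁,…,E₅ of the rank 6 lattice with Gram matrix [[0,0,0,1,0,0],[0,−2,1,0,0,0],[0,1,−2,1,0,0],[1,0,1,−2,1,0],[0,0,0,1,−2,1],[0,0,0,0,1,−2]] plus an orthogonal generator ϵ of square −2, the vectors E₁,E₂,E₃,E₄,E₅,C₁−ϵ span a copy of E₆(−1), the vector 2(2C₁+E₁+2E₂+3E₃+2E₄+E₅)−3ϵ has square 6 and is orthogonal to that copy, and together they form a ℤ-basis of the whole lattice. -/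
open Matrix

/-- Gram matrix of the rank 7 lattice `U ⊕ A₂(-1)⊕2 ⊕ ⟨-2⟩` presented in the basis
`C₁, E₁, E₂, E₃, E₄, E₅, ϵ`. -/
def G9 : Matrix (Fin 7) (Fin 7) ℤ :=
  !![0,0,0,1,0,0,0; 0,-2,1,0,0,0,0; 0,1,-2,1,0,0,0; 1,0,1,-2,1,0,0;
     0,0,0,1,-2,1,0; 0,0,0,0,1,-2,0; 0,0,0,0,0,0,-2]

/-- Matrix whose columns are `E₁, E₂, E₃, E₄, E₅, C₁-ϵ, 2(2C₁+E₁+2E₂+3E₃+2E₄+E₅)-3ϵ`. -/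
def P9 : Matrix (Fin 7) (Fin 7) ℤ :=
  !![0,0,0,0,0,1,4; 1,0,0,0,0,0,2; 0,1,0,0,0,0,4; 0,0,1,0,0,0,6;
     0,0,0,1,0,0,4; 0,0,0,0,1,0,2; 0,0,0,0,0,-1,-3]

/-- The Gram matrix of the first six of these vectors, together with the orthogonal
square 6 vector in the last slot. -/
def G9' : Matrix (Fin 7) (Fin 7) ℤ :=
  !![-2,1,0,0,0,0,0; 1,-2,1,0,0,0,0; 0,1,-2,1,0,1,0; 0,0,1,-2,1,0,0;
     0,0,0,1,-2,0,0; 0,0,1,0,0,-2,0; 0,0,0,0,0,0,6]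

/-- Gram matrix of `E₆(-1)` (negated Bourbaki `E₆`). -/
def E6neg : Matrix (Fin 6) (Fin 6) ℤ :=
  !![-2,0,1,0,0,0; 0,-2,0,1,0,0; 1,0,-2,1,0,0; 0,1,1,-2,1,0; 0,0,0,1,-2,1; 0,0,0,0,1,-2]

/-- `U ⊕ A₂(-1)⊕2 ⊕ ⟨-2⟩ ≅ E₆(-1) ⊕ ⟨6⟩`: the vectors
`E₁,…,E₅, C₁-ϵ` span a copy of `E₆(-1)`, the vector `2(2C₁+E₁+2E₂+3E₃+2E₄+E₅)-3ϵ` has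
square 6 and is orthogonal to that copy, and together they form a ℤ-basis of the lattice. -/
theorem stmt_9 :
    IsUnit P9.det ∧ P9ᵀ * G9 * P9 = G9' ∧
    LatIsom (G9'.submatrix (Fin.castLE (by omega)) (Fin.castLE (by omega))) E6neg := by

  have hinv : P9 * !![-2,1,0,0,0,0,-2; -4,0,1,0,0,0,-4; -6,0,0,1,0,0,-6; -4,0,0,0,1,0,-4;
      -2,0,0,0,0,1,-2; -3,0,0,0,0,0,-4; 1,0,0,0,0,0,1] = 1 := by decide
  refine ⟨Matrix.isUnit_det_of_right_inverse hinv, by decide, ?_⟩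
  refine ⟨!![1,0,0,0,0,0; 0,0,1,0,0,0; 0,0,0,1,0,0; 0,0,0,0,1,0; 0,0,0,0,0,1; 0,1,0,0,0,0], ?_, by decide⟩
  exact Matrix.isUnit_det_of_right_inverse
      (B := !![1,0,0,0,0,0; 0,0,0,0,0,1; 0,1,0,0,0,0; 0,0,1,0,0,0; 0,0,0,1,0,0; 0,0,0,0,1,0])
      (by decide)
end

section
/- The rank 8 lattice with Gram matrix [[0,1,0,0,0,0,0,0],[1,−2,1,0,0,0,0,0],[0,1,−2,1,0,0,0,0],[0,0,1,−2,1,0,0,0],[0,0,0,1,−2,1,0,1],[0,0,0,0,1,−2,1,0],[0,0,0,0,0,1,−2,0],[0,0,0,0,1,0,0,−2]] in basis C₁,E₁,…,E₇ is isometric to U ⊕ E₆(−1), via the basis C₁, C₁+E₁ (spanning U) and E₂−C₁, E₃, E₄, E₅, E₆, E₇ (spanning E₆(−1)). -/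
open Matrix

/-- Gram matrix of the rank 8 lattice in the basis `C₁, E₁, …, E₇`. -/
def G10 : Matrix (Fin 8) (Fin 8) ℤ :=
  !![0,1,0,0,0,0,0,0; 1,-2,1,0,0,0,0,0; 0,1,-2,1,0,0,0,0; 0,0,1,-2,1,0,0,0;
     0,0,0,1,-2,1,0,1; 0,0,0,0,1,-2,1,0; 0,0,0,0,0,1,-2,0; 0,0,0,0,1,0,0,-2]

/-- Matrix whose columns are `C₁, C₁+E₁, E₂-C₁, E₃, E₄, E₅, E₆, E₇`. -/
def P10 : Matrix (Fin 8) (Fin 8) ℤ :=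
  !![1,1,-1,0,0,0,0,0; 0,1,0,0,0,0,0,0; 0,0,1,0,0,0,0,0; 0,0,0,1,0,0,0,0;
     0,0,0,0,1,0,0,0; 0,0,0,0,0,1,0,0; 0,0,0,0,0,0,1,0; 0,0,0,0,0,0,0,1]

/-- Gram matrix of the new basis: hyperbolic plane `U` on `C₁, C₁+E₁`, orthogonal to a
copy of `E₆(-1)` spanned by `E₂-C₁, E₃, …, E₇`. -/
def G10' : Matrix (Fin 8) (Fin 8) ℤ :=
  !![0,1,0,0,0,0,0,0; 1,0,0,0,0,0,0,0; 0,0,-2,1,0,0,0,0; 0,0,1,-2,1,0,0,0;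
     0,0,0,1,-2,1,0,1; 0,0,0,0,1,-2,1,0; 0,0,0,0,0,1,-2,0; 0,0,0,0,1,0,0,-2]

/-- Gram matrix of `E₆(-1)` (negated Bourbaki `E₆`). -/
def E6neg10 : Matrix (Fin 6) (Fin 6) ℤ :=
  !![-2,0,1,0,0,0; 0,-2,0,1,0,0; 1,0,-2,1,0,0; 0,1,1,-2,1,0; 0,0,0,1,-2,1; 0,0,0,0,1,-2]

/-- Two integral lattices given by Gram matrices are isometric. -/
def LatIsom10 {n : ℕ} (G G' : Matrix (Fin n) (Fin n) ℤ) : Prop :=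
  ∃ P : Matrix (Fin n) (Fin n) ℤ, IsUnit P.det ∧ Pᵀ * G * P = G'

/-- Right inverse of `P10`. -/
def Q10aux : Matrix (Fin 8) (Fin 8) ℤ :=
  !![1,-1,1,0,0,0,0,0; 0,1,0,0,0,0,0,0; 0,0,1,0,0,0,0,0; 0,0,0,1,0,0,0,0;
     0,0,0,0,1,0,0,0; 0,0,0,0,0,1,0,0; 0,0,0,0,0,0,1,0; 0,0,0,0,0,0,0,1]

/-- Permutation matrix matching the `E₆` diagram in `G10'` to Bourbaki numbering. -/
def P6aux10 : Matrix (Fin 6) (Fin 6) ℤ :=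
  !![1,0,0,0,0,0; 0,0,1,0,0,0; 0,0,0,1,0,0; 0,0,0,0,1,0; 0,0,0,0,0,1; 0,1,0,0,0,0]

theorem P10_isUnit_det : IsUnit P10.det :=
  Matrix.isUnit_det_of_right_inverse (B := Q10aux) (by decide)

theorem P6aux10_isUnit_det : IsUnit P6aux10.det :=
  Matrix.isUnit_det_of_right_inverse (B := P6aux10ᵀ) (by decide)

/-- the rank 8 lattice `G10` is isometric to `U ⊕ E₆(-1)` via the ℤ-basis
`C₁, C₁+E₁` (spanning `U`) and `E₂-C₁, E₃, …, E₇` (spanning a copy of `E₆(-1)`). -/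
theorem stmt_10 :
    IsUnit P10.det ∧ P10ᵀ * G10 * P10 = G10' ∧
    LatIsom10 (G10'.submatrix (Fin.natAdd 2) (Fin.natAdd 2)) E6neg10 := by
  exact ⟨P10_isUnit_det, by decide, P6aux10, P6aux10_isUnit_det, by decide⟩
end

section
/- Up to conjugation in O(D₄), there is exactly one isometry of the lattice D₄ of order three whose only eigenvalues are the two primitive third roots of unity (equivalently, order three with no nonzero fixed vector), each with a two-dimensional eigenspace. -/
open Matrix Polynomial

/-- Gram matrix of the root lattice `D₄`. -/
def GD4 : Matrix (Fin 4) (Fin 4) ℤ := !![2,0,1,0; 0,2,-1,0; 1,-1,2,-1; 0,0,-1,2]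

/-- `R` is an isometry of `D₄` of order three with no nonzero fixed vector
(equivalently, its only eigenvalues are the two primitive third roots of unity). -/
def IsTriD4 (R : Matrix (Fin 4) (Fin 4) ℤ) : Prop :=
  IsUnit R.det ∧ Rᵀ * GD4 * R = GD4 ∧ R ^ 3 = 1 ∧ R ≠ 1 ∧
    ∀ v : Fin 4 → ℤ, R.mulVec v = v → v = 0

/-!
An isometry `R` of order three without fixed vectors satisfies `R² + R + 1 = 0`, since `R` fixes
every column of `R² + R + 1`. Then `X - R` divides `X² + X + 1` in the matrices over `ℚ[X]`, so the
characteristic polynomial divides `(X² + X + 1)⁴`; as `X² + X + 1` is irreducible over `ℚ`, it is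
`(X² + X + 1)²`. For the classification, the columns of `R` are the images of the basis, hence
roots of `D₄` (there are 24) with Gram matrix `GD4`. A finite search shows that sixteen such
quadruples satisfy `R² + R + 1 = 0`, and each is conjugate to `triD4` by an explicit isometry.
-/

theorem Commute.sub_dvd_aeval_sub {R A : Type*} [CommSemiring R] [Ring A] [Algebra R A]
    {a b : A} (h : Commute a b) (p : R[X]) : a - b ∣ aeval a p - aeval b p := by
  rw [aeval_eq_sum_range, aeval_eq_sum_range, ← Finset.sum_sub_distrib]
  refine Finset.dvd_sum fun i _ => ?_
  obtain ⟨c, hc⟩ := h.sub_dvd_pow_sub_pow i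
  exact ⟨p.coeff i • c, by rw [← smul_sub, hc, mul_smul_comm]⟩

section Matrix

variable {n R : Type*} [Fintype n] [DecidableEq n] [CommRing R]

theorem Matrix.charpoly_dvd_pow_card_of_aeval_eq_zero (M : Matrix n n R) {p : R[X]}
    (hp : aeval M p = 0) : M.charpoly ∣ p ^ Fintype.card n := by
  have hcomm : Commute (scalar n (X : R[X])) (M.map C) := scalar_commute _ (Commute.all _) _
  obtain ⟨B, hB⟩ := hcomm.sub_dvd_aeval_sub p
  have hscalar : aeval (scalar n (X : R[X])) p = scalar n p := by
    have hX : scalar n (X : R[X]) = algebraMap R[X] (Matrix n n R[X]) X := rfl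
    rw [hX, aeval_algebraMap_apply, aeval_X_left_apply]
    rfl
  have hmap : aeval (M.map C) p = 0 := by
    have h := aeval_algHom_apply ((Algebra.ofId R R[X]).mapMatrix (m := n)) M p
    rwa [hp, map_zero] at h
  refine ⟨B.det, ?_⟩
  rw [hscalar, hmap, sub_zero] at hB
  rw [charpoly, charmatrix, ← det_mul, RingHom.mapMatrix_apply, ← hB]
  simp

theorem Matrix.charpoly_eq_pow_of_aeval_eq_zero {K : Type*} [Field K] (M : Matrix n n K)
    {p : K[X]} (hirr : Irreducible p) (hmonic : p.Monic) (hp : aeval M p = 0) {k : ℕ}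
    (hk : k * p.natDegree = Fintype.card n) : M.charpoly = p ^ k := by
  obtain ⟨i, -, hassoc⟩ :=
    (dvd_prime_pow hirr.prime _).mp (M.charpoly_dvd_pow_card_of_aeval_eq_zero hp)
  have hi : M.charpoly = p ^ i :=
    eq_of_monic_of_associated M.charpoly_monic (hmonic.pow i) hassoc
  have hdeg : i * p.natDegree = k * p.natDegree := by
    rw [hk, ← M.charpoly_natDegree_eq_dim, hi, hmonic.natDegree_pow]
  rw [hi, Nat.eq_of_mul_eq_mul_right hirr.natDegree_pos hdeg]

theorem Matrix.charpoly_eq_of_sq_add_self_add_one_eq_zero (M : Matrix n n ℤ)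
    (hM : M ^ 2 + M + 1 = 0) {k : ℕ} (hk : 2 * k = Fintype.card n) :
    M.charpoly = (X ^ 2 + X + 1) ^ k := by
  have hMq : aeval (M.map (Int.castRingHom ℚ)) (cyclotomic 3 ℚ) = 0 := by
    have h := congrArg (Int.castRingHom ℚ).mapMatrix hM
    rw [map_add, map_add, map_pow, map_one, map_zero] at h
    simpa [cyclotomic_three] using h
  have hq := (M.map (Int.castRingHom ℚ)).charpoly_eq_pow_of_aeval_eq_zero
    (cyclotomic.irreducible_rat (by norm_num)) (cyclotomic.monic 3 ℚ) hMq
    (k := k) (by rw [natDegree_cyclotomic, Nat.totient_prime Nat.prime_three]; lia)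
  refine Polynomial.map_injective (Int.castRingHom ℚ) (RingHom.injective_int _) ?_
  rw [← charpoly_map, hq, cyclotomic_three]
  simp

theorem Matrix.sq_add_self_add_one_eq_zero_of_pow_three_eq_one {M : Matrix n n R}
    (h3 : M ^ 3 = 1) (hfix : ∀ v, M *ᵥ v = v → v = 0) : M ^ 2 + M + 1 = 0 := by
  have hN : M * (M ^ 2 + M + 1) = M ^ 2 + M + 1 := by
    calc M * (M ^ 2 + M + 1) = M ^ 3 + M ^ 2 + M := by noncomm_ring
      _ = M ^ 2 + M + 1 := by rw [h3]; abel
  ext i j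
  have hcol := hfix ((M ^ 2 + M + 1).col j) (by rw [← mulVec_single_one, mulVec_mulVec, hN])
  simpa using congrFun hcol i

theorem Matrix.eq_zero_of_mulVec_eq_self [IsAddTorsionFree R] {M : Matrix n n R}
    (hM : M ^ 2 + M + 1 = 0) (v : n → R) (hv : M *ᵥ v = v) : v = 0 := by
  have h : (M ^ 2 + M + 1) *ᵥ v = 3 • v := by
    rw [add_mulVec, add_mulVec, one_mulVec, sq, ← mulVec_mulVec, hv, hv]; abel
  rw [hM, zero_mulVec] at h
  exact nsmul_right_injective (by norm_num : (3 : ℕ) ≠ 0) (h.symm.trans (smul_zero 3).symm)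

theorem Matrix.isUnit_det_of_transpose_mul_mul_self [IsDomain R] {G P : Matrix n n R}
    (hG : G.det ≠ 0) (h : Pᵀ * G * P = G) : IsUnit P.det := by
  have h' := congrArg det h
  rw [det_mul, det_mul, det_transpose] at h'
  exact IsUnit.of_mul_eq_one (b := P.det) (mul_right_cancel₀ hG (by linear_combination h'))

theorem Matrix.transpose_mul_mul_self_mul_inv {G P Q : Matrix n n R} (hu : IsUnit P.det)
    (hP : Pᵀ * G * P = G) (hQ : Qᵀ * G * Q = G) : (Q * P⁻¹)ᵀ * G * (Q * P⁻¹) = G := by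
  calc (Q * P⁻¹)ᵀ * G * (Q * P⁻¹) = P⁻¹ᵀ * (Qᵀ * G * Q) * P⁻¹ := by
        simp only [transpose_mul, Matrix.mul_assoc]
    _ = (Pᵀ)⁻¹ * (Pᵀ * G * P) * P⁻¹ := by rw [hQ, hP, transpose_nonsing_inv]
    _ = G := by
        rw [Matrix.mul_assoc, Matrix.mul_assoc, mul_nonsing_inv _ hu, Matrix.mul_one,
          ← Matrix.mul_assoc, nonsing_inv_mul _ (by rwa [det_transpose]), Matrix.one_mul]

theorem Matrix.mul_mul_inv_eq_of_mul_eq {A B C P Q : Matrix n n R} (hu : IsUnit P.det)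
    (hA : A * P = P * C) (hB : B * Q = Q * C) : B * (Q * P⁻¹) = Q * P⁻¹ * A := by
  have hC : C * P⁻¹ = P⁻¹ * A := by
    rw [← Matrix.one_mul (C * P⁻¹), ← nonsing_inv_mul _ hu, Matrix.mul_assoc,
      ← Matrix.mul_assoc P, ← hA, Matrix.mul_assoc, mul_nonsing_inv _ hu, Matrix.mul_one]
  rw [← Matrix.mul_assoc, hB, Matrix.mul_assoc, hC, Matrix.mul_assoc]

end Matrix

-- The form of `GD4` on tuples rather than `Fin 4 → ℤ`, which the kernel evaluates quickly.
def d4Form (a b : ℤ × ℤ × ℤ × ℤ) : ℤ :=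
  2 * a.1 * b.1 + 2 * a.2.1 * b.2.1 + 2 * a.2.2.1 * b.2.2.1 + 2 * a.2.2.2 * b.2.2.2
    + a.1 * b.2.2.1 + a.2.2.1 * b.1 - a.2.1 * b.2.2.1 - a.2.2.1 * b.2.1
    - a.2.2.1 * b.2.2.2 - a.2.2.2 * b.2.2.1

def colTuple (M : Matrix (Fin 4) (Fin 4) ℤ) (j : Fin 4) : ℤ × ℤ × ℤ × ℤ :=
  (M 0 j, M 1 j, M 2 j, M 3 j)

def ofCols (a b c d : ℤ × ℤ × ℤ × ℤ) : Matrix (Fin 4) (Fin 4) ℤ :=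
  !![a.1, b.1, c.1, d.1;
     a.2.1, b.2.1, c.2.1, d.2.1;
     a.2.2.1, b.2.2.1, c.2.2.1, d.2.2.1;
     a.2.2.2, b.2.2.2, c.2.2.2, d.2.2.2]

theorem d4Form_colTuple (M : Matrix (Fin 4) (Fin 4) ℤ) (i j : Fin 4) :
    d4Form (colTuple M i) (colTuple M j) = (Mᵀ * GD4 * M) i j := by
  simp only [d4Form, colTuple, GD4, mul_apply, transpose_apply, of_apply, cons_val',
    cons_val_fin_one, Fin.sum_univ_four, cons_val_zero, cons_val_one, cons_val, mul_zero,
    add_zero, mul_one, zero_add, mul_neg]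
  ring

theorem ofCols_colTuple (M : Matrix (Fin 4) (Fin 4) ℤ) :
    ofCols (colTuple M 0) (colTuple M 1) (colTuple M 2) (colTuple M 3) = M := by
  ext i j; fin_cases i <;> fin_cases j <;> rfl

def d4Roots : List (ℤ × ℤ × ℤ × ℤ) := [
  (-1,0,0,0), (-1,0,1,0), (-1,0,1,1), (-1,1,1,0), (-1,1,1,1), (-1,1,2,1), (0,-1,-1,-1),
  (0,-1,-1,0), (0,-1,0,0), (0,0,-1,-1), (0,0,-1,0), (0,0,0,-1), (0,0,0,1), (0,0,1,0),
  (0,0,1,1), (0,1,0,0), (0,1,1,0), (0,1,1,1), (1,-1,-2,-1), (1,-1,-1,-1), (1,-1,-1,0),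
  (1,0,-1,-1), (1,0,-1,0), (1,0,0,0)]

theorem mem_d4Roots_of_mem_box : ∀ a ∈ Finset.Icc (-2 : ℤ) 2, ∀ b ∈ Finset.Icc (-2 : ℤ) 2,
    ∀ c ∈ Finset.Icc (-2 : ℤ) 2, ∀ d ∈ Finset.Icc (-2 : ℤ) 2,
    d4Form (a, b, c, d) (a, b, c, d) = 2 → (a, b, c, d) ∈ d4Roots := by
  decide

theorem mem_d4Roots {x : ℤ × ℤ × ℤ × ℤ} (h : d4Form x x = 2) : x ∈ d4Roots := by
  obtain ⟨a, b, c, d⟩ := x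
  simp only [d4Form] at h
  have hsum : (2 * a + c) ^ 2 + (2 * b - c) ^ 2 + (2 * d - c) ^ 2 + c ^ 2 = 2 ^ 2 := by
    linear_combination 2 * h
  have bound : ∀ t : ℤ, t ^ 2 ≤ 2 ^ 2 → -2 ≤ t ∧ t ≤ 2 := fun t ht =>
    abs_le_of_sq_le_sq' ht (by norm_num)
  have ha := bound (2 * a + c) (by nlinarith)
  have hb := bound (2 * b - c) (by nlinarith)
  have hd := bound (2 * d - c) (by nlinarith)
  have hc := bound c (by nlinarith)
  exact mem_d4Roots_of_mem_box a (Finset.mem_Icc.mpr (by omega)) b (Finset.mem_Icc.mpr (by omega))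
    c (Finset.mem_Icc.mpr (by omega)) d (Finset.mem_Icc.mpr (by omega))
    (by simp only [d4Form]; linear_combination h)

def triD4 : Matrix (Fin 4) (Fin 4) ℤ := !![-1,0,-1,1; 0,0,0,-1; 1,1,0,-1; 0,1,0,-1]

-- Witnesses found by computer search.
def conjugators : List (Matrix (Fin 4) (Fin 4) ℤ × Matrix (Fin 4) (Fin 4) ℤ) := [
  (!![-1,0,-1,1; 0,0,0,-1; 1,1,0,-1; 0,1,0,-1], !![-1,-1,0,0; 0,1,0,-1; 0,2,-1,0; 0,1,0,0]),
  (!![-1,1,-1,0; 0,-1,0,1; 1,-1,0,1; 0,-1,0,0], !![-1,-1,0,0; 0,1,0,0; 0,2,-1,0; 0,1,0,-1]),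
  (!![-1,0,0,-1; 0,0,-1,1; 1,1,-1,1; 1,0,0,0], !![-1,-1,0,0; 0,1,0,-1; 0,2,-1,0; 0,1,-1,0]),
  (!![-1,1,-1,0; 0,-1,1,-1; 1,-1,1,-1; 1,0,1,-1], !![-1,-1,0,0; 0,1,0,0; 0,2,-1,0; 0,1,-1,1]),
  (!![-1,-1,0,0; 1,0,0,0; 1,1,-1,1; 0,1,-1,0], !![-1,-1,0,0; 0,1,-1,0; 0,2,-1,0; 0,1,0,-1]),
  (!![-1,0,-1,1; 1,-1,1,0; 1,-1,1,-1; 0,-1,1,-1], !![-1,-1,0,0; 0,1,-1,1; 0,2,-1,0; 0,1,0,0]),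
  (!![-1,-1,0,0; 1,0,0,0; 1,1,0,-1; 1,0,1,-1], !![-1,-1,0,0; 0,1,-1,0; 0,2,-1,0; 0,1,-1,1]),
  (!![-1,0,0,-1; 1,-1,1,0; 1,-1,0,1; 1,0,0,0], !![-1,-1,0,0; 0,1,-1,1; 0,2,-1,0; 0,1,-1,0]),
  (!![0,0,0,1; -1,0,-1,0; -1,1,-1,-1; -1,0,0,-1], !![-1,0,-1,1; 0,-1,1,-1; 0,0,1,-2; 0,0,1,-1]),
  (!![0,1,0,0; -1,-1,0,0; -1,-1,-1,1; -1,0,-1,0], !![-1,0,-1,0; 0,-1,1,0; 0,0,1,0; 0,0,1,-1]),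
  (!![0,0,1,-1; -1,0,-1,0; -1,1,-2,1; 0,1,-1,0], !![-1,0,-1,1; 0,-1,1,-1; 0,0,1,-2; 0,0,0,-1]),
  (!![0,1,0,0; -1,-1,0,0; -1,-1,0,-1; 0,-1,1,-1], !![-1,0,-1,0; 0,-1,1,0; 0,0,1,0; 0,0,0,1]),
  (!![0,-1,1,0; 0,0,-1,1; -1,1,-2,1; -1,0,-1,0], !![-1,0,-1,1; 0,0,0,-1; 0,0,1,-2; 0,-1,1,-1]),
  (!![0,0,0,1; 0,-1,1,-1; -1,-1,0,-1; -1,0,0,-1], !![-1,0,-1,0; 0,0,0,1; 0,0,1,0; 0,-1,1,0]),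
  (!![0,-1,1,0; 0,0,0,-1; -1,1,-1,-1; 0,1,0,-1], !![-1,0,-1,1; 0,0,0,-1; 0,0,1,-2; 0,1,0,-1]),
  (!![0,0,1,-1; 0,-1,0,1; -1,-1,-1,1; 0,-1,0,0], !![-1,0,-1,0; 0,0,0,1; 0,0,1,0; 0,1,0,0])]

set_option maxHeartbeats 1000000 in
theorem ofCols_mem_conjugators : ∀ a ∈ d4Roots, ∀ b ∈ d4Roots, d4Form a b = 0 →
    ∀ c ∈ d4Roots, d4Form a c = 1 → d4Form b c = -1 →
    ∀ d ∈ d4Roots, d4Form a d = 0 → d4Form b d = 0 → d4Form c d = -1 →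
    ofCols a b c d * ofCols a b c d + ofCols a b c d + 1 = 0 →
    ofCols a b c d ∈ conjugators.map Prod.fst := by
  decide

theorem conjugators_spec :
    ∀ q ∈ conjugators, q.1 * q.2 = q.2 * triD4 ∧ q.2ᵀ * GD4 * q.2 = GD4 := by
  decide

theorem det_GD4_ne_zero : GD4.det ≠ 0 := by decide

theorem isTriD4_iff {R : Matrix (Fin 4) (Fin 4) ℤ} :
    IsTriD4 R ↔ Rᵀ * GD4 * R = GD4 ∧ R ^ 2 + R + 1 = 0 := by
  constructor
  · rintro ⟨-, hG, h3, -, hfix⟩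
    exact ⟨hG, sq_add_self_add_one_eq_zero_of_pow_three_eq_one h3 hfix⟩
  · rintro ⟨hG, hR⟩
    have hfix := eq_zero_of_mulVec_eq_self hR
    refine ⟨isUnit_det_of_transpose_mul_mul_self det_GD4_ne_zero hG, hG, ?_, ?_, hfix⟩
    · calc R ^ 3 = (R - 1) * (R ^ 2 + R + 1) + 1 := by noncomm_ring
        _ = 1 := by rw [hR, Matrix.mul_zero, zero_add]
    · rintro rfl
      simpa using congrFun (hfix (Pi.single 0 1) (one_mulVec _)) 0

theorem IsTriD4.exists_isometry_conj_triD4 {R : Matrix (Fin 4) (Fin 4) ℤ} (h : IsTriD4 R) :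
    ∃ P, Pᵀ * GD4 * P = GD4 ∧ R * P = P * triD4 := by
  obtain ⟨hG, hR⟩ := isTriD4_iff.mp h
  have gram (i j : Fin 4) : d4Form (colTuple R i) (colTuple R j) = GD4 i j := by
    rw [d4Form_colTuple, hG]
  have hmem : R ∈ conjugators.map Prod.fst := by
    rw [sq, ← ofCols_colTuple R] at hR
    rw [← ofCols_colTuple R]
    exact ofCols_mem_conjugators _ (mem_d4Roots (gram 0 0)) _ (mem_d4Roots (gram 1 1)) (gram 0 1)
      _ (mem_d4Roots (gram 2 2)) (gram 0 2) (gram 1 2)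
      _ (mem_d4Roots (gram 3 3)) (gram 0 3) (gram 1 3) (gram 2 3) hR
  obtain ⟨⟨R', P⟩, hq, rfl⟩ := List.mem_map.mp hmem
  exact ⟨P, (conjugators_spec _ hq).2, (conjugators_spec _ hq).1⟩

/-- there exists an order three isometry of `D₄` with no nonzero fixed
vector; any two such are conjugate by an isometry of `D₄` (uniqueness up to conjugation in
`O(D₄)`); and each such isometry has characteristic polynomial `(X²+X+1)²`, i.e. its only
eigenvalues are the two primitive third roots of unity, each with two-dimensional
eigenspace. -/
theorem stmt_14 :
    (∃ R, IsTriD4 R) ∧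
    (∀ R S, IsTriD4 R → IsTriD4 S →
      ∃ P : Matrix (Fin 4) (Fin 4) ℤ, IsUnit P.det ∧ Pᵀ * GD4 * P = GD4 ∧
        S * P = P * R) ∧
    (∀ R, IsTriD4 R → R.charpoly = (X ^ 2 + X + 1) ^ 2) := by
  refine ⟨⟨triD4, isTriD4_iff.mpr ⟨by decide, by decide⟩⟩, fun R S hR hS => ?_, fun R hR => ?_⟩
  · obtain ⟨P, hP, hRP⟩ := hR.exists_isometry_conj_triD4
    obtain ⟨Q, hQ, hSQ⟩ := hS.exists_isometry_conj_triD4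
    have hu : IsUnit P.det := isUnit_det_of_transpose_mul_mul_self det_GD4_ne_zero hP
    have hQP := transpose_mul_mul_self_mul_inv hu hP hQ
    exact ⟨Q * P⁻¹, isUnit_det_of_transpose_mul_mul_self det_GD4_ne_zero hQP, hQP,
      mul_mul_inv_eq_of_mul_eq hu hRP hSQ⟩
  · exact Matrix.charpoly_eq_of_sq_add_self_add_one_eq_zero R (isTriD4_iff.mp hR).2 (by simp)
end

section
/- Let f₂ be a rank 3 quadratic form in x₁,…,x₄, so that the singular locus of the quadric {f₂ = 0} ⊂ ℙ⁴ (coordinates x₁,…,x₅) is a line L, and let f₃ be a cubic form with K = {f₃ + x₅³ = 0}. For generic f₃, the line L meets K in exactly three distinct points, and the automorphism τ: x₅ ↦ ζ₃x₅ of ℙ⁴ permutes these three points cyclically with no fixed point among them. -/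
open MvPolynomial

lemma aux_cube_root (ζ : ℂ) (hζ : IsPrimitiveRoot ζ 3) {x : ℂ} (hx : x ^ 3 = 1) :
    x = 1 ∨ x = ζ ∨ x = ζ ^ 2 := by
  obtain ⟨i, hi, hix⟩ := hζ.eq_pow_of_pow_eq_one hx
  interval_cases i
  · left; simpa using hix.symm
  · right; left; simpa using hix.symm
  · right; right; exact hix.symm

/-- let `f₂` be a rank 3 quadratic form in `x₁,…,x₄`, so that the singular
locus of the quadric `{f₂ = 0} ⊂ ℙ⁴` is the line `L` spanned by the kernel direction `v`
and the `x₅`-axis.  The restriction of `f₃ + x₅³` to `L` (normalizing the `v`-coordinate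
to 1) is `s³ + f₃(v)`, and for generic `f₃`, i.e. whenever `a = f₃(v) ≠ 0`, the line `L`
meets `K = {f₃ + x₅³ = 0}` in exactly three distinct points, which are permuted cyclically
and without fixed point by the automorphism `τ : x₅ ↦ ζ₃ x₅`. -/
theorem stmt_17 (f₃ : MvPolynomial (Fin 4) ℂ) (hf₃ : f₃.IsHomogeneous 3)
    (v : Fin 4 → ℂ) (ζ : ℂ) (hζ : IsPrimitiveRoot ζ 3)
    (ha : eval v f₃ ≠ 0) :
    ({s : ℂ | s ^ 3 + eval v f₃ = 0}.ncard = 3) ∧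
    (∀ s ∈ {s : ℂ | s ^ 3 + eval v f₃ = 0}, ζ * s ∈ {s : ℂ | s ^ 3 + eval v f₃ = 0}) ∧
    (∀ s ∈ {s : ℂ | s ^ 3 + eval v f₃ = 0}, ζ * s ≠ s) ∧
    (∀ s₁ ∈ {s : ℂ | s ^ 3 + eval v f₃ = 0}, ∀ s₂ ∈ {s : ℂ | s ^ 3 + eval v f₃ = 0},
      s₂ = s₁ ∨ s₂ = ζ * s₁ ∨ s₂ = ζ ^ 2 * s₁) := by
  set a := eval v f₃ with haa
  have hζ3 : ζ ^ 3 = 1 := hζ.pow_eq_one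
  have hζ0 : ζ ≠ 0 := hζ.ne_zero (by norm_num)
  have hζ1 : ζ ≠ 1 := hζ.ne_one (by norm_num)
  have hζ21 : ζ ^ 2 ≠ 1 := hζ.pow_ne_one_of_pos_of_lt (by norm_num) (by norm_num)
  have hζζ2 : ζ ≠ ζ ^ 2 := by
    intro h
    apply hζ1
    have : ζ * 1 = ζ * ζ := by rw [mul_one, ← sq, ← h]
    exact (mul_left_cancel₀ hζ0 this).symm
  -- root membership characterization
  have hmem : ∀ s : ℂ, s ∈ {s : ℂ | s ^ 3 + a = 0} ↔ s ^ 3 = -a := by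
    intro s
    simp only [Set.mem_setOf_eq]
    constructor <;> intro h <;> linear_combination h
  have hna : (-a : ℂ) ≠ 0 := neg_ne_zero.mpr ha
  obtain ⟨b, hb⟩ : ∃ b : ℂ, b ^ 3 = -a :=
    ⟨(-a) ^ ((3 : ℂ)⁻¹), by
      have := Complex.cpow_nat_inv_pow (-a) (by norm_num : (3:ℕ) ≠ 0)
      simpa using this⟩
  have hb0 : b ≠ 0 := by
    intro h; rw [h] at hb; simp at hb; exact ha hb
  have hperm : ∀ s ∈ {s : ℂ | s ^ 3 + a = 0}, ζ * s ∈ {s : ℂ | s ^ 3 + a = 0} := by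
    intro s hs
    rw [hmem] at hs ⊢
    rw [mul_pow, hζ3, one_mul, hs]
  have hs0 : ∀ s ∈ {s : ℂ | s ^ 3 + a = 0}, s ≠ 0 := by
    intro s hs h
    rw [hmem, h] at hs; simp at hs; exact ha hs
  have hratio : ∀ s₁ ∈ {s : ℂ | s ^ 3 + a = 0}, ∀ s₂ ∈ {s : ℂ | s ^ 3 + a = 0},
      s₂ = s₁ ∨ s₂ = ζ * s₁ ∨ s₂ = ζ ^ 2 * s₁ := by
    intro s₁ h₁ s₂ h₂
    have h10 := hs0 s₁ h₁
    rw [hmem] at h₁ h₂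
    have hr : (s₂ / s₁) ^ 3 = 1 := by
      rw [div_pow, h₁, h₂, div_self hna]
    rcases aux_cube_root ζ hζ hr with h | h | h <;> rw [div_eq_iff h10] at h
    · left; linear_combination h
    · right; left; exact h
    · right; right; exact h
  refine ⟨?_, hperm, ?_, hratio⟩
  · have hset : {s : ℂ | s ^ 3 + a = 0} = {b, ζ * b, ζ ^ 2 * b} := by
      ext s
      rw [hmem]
      constructor
      · intro hs
        have := hratio b ((hmem b).2 hb) s ((hmem s).2 hs)
        simpa [Set.mem_insert_iff] using this
      · rintro (rfl | rfl | rfl)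
        · exact hb
        · rw [mul_pow, hζ3, one_mul, hb]
        · rw [mul_pow, ← pow_mul, show 2 * 3 = 3 * 2 by ring, pow_mul, hζ3, one_pow, one_mul, hb]
    rw [hset]
    rw [Set.ncard_insert_of_notMem, Set.ncard_insert_of_notMem, Set.ncard_singleton]
    · simp only [Set.mem_singleton_iff]
      exact fun h => hζζ2 (mul_right_cancel₀ hb0 h)
    · simp only [Set.mem_insert_iff, Set.mem_singleton_iff]
      push_neg
      constructor
      · intro h
        apply hζ1
        have : ζ * b = 1 * b := by rw [one_mul, ← h]
        exact mul_right_cancel₀ hb0 this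
      · intro h
        apply hζ21
        have : ζ ^ 2 * b = 1 * b := by rw [one_mul, ← h]
        exact mul_right_cancel₀ hb0 this
  · intro s hs h
    have hsne := hs0 s hs
    apply hζ1
    have : ζ * s = 1 * s := by rw [one_mul, h]
    exact mul_right_cancel₀ hsne this
end
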